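/- Let φ_t : ℝ³ → ℝ³ (t ∈ ℝ) be a family of diffeomorphisms with φ_t = id for t ≤ t₀, and U ⊆ ℝ³ a set with φ_t(U) ∩ U = ∅ for all t > t₁ > t₀. If F : L²(ℝ³) × L²(ℝ³) → ℂ is any function invariant under simultaneous domain-transformation of both arguments (F(φ_*ψ₁, φ_*ψ₂) = F(ψ₁, ψ₂)) and agreeing with the L² inner product, then F is NOT invariant under transforming only the first argument: specifically, for any ψ_l, ψ_r supported in U with ⟨ψ_l, ψ_r⟩ ≠ 0 and any t > t₁, F((φ_t)_*ψ_l, ψ_r) = 0 ≠ F(ψ_l, ψ_r). -/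

import Mathlib

open MeasureTheory
open scoped ComplexConjugate

/-- let `φ_t` be a family of diffeomorphisms of ℝ³ with
`φ_t = id` for `t ≤ t₀` and `φ_t(U) ∩ U = ∅` for `t > t₁ > t₀`. If
`F : L² × L² → ℂ` is invariant under simultaneous pushforward of both
arguments and agrees with the L² inner product, then `F` is NOT invariant
under transforming only the first argument: for `ψ_l, ψ_r` supported in `U`
with `F(ψ_l, ψ_r) ≠ 0` and any `t > t₁`,
`F((φ_t)_*ψ_l, ψ_r) = 0 ≠ F(ψ_l, ψ_r)`. -/
theorem stmt16 (t₀ t₁ : ℝ) (ht : t₀ < t₁)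
    (φ : ℝ → ((Fin 3 → ℝ) ≃ (Fin 3 → ℝ)))
    (hid : ∀ t ≤ t₀, φ t = Equiv.refl _)
    (U : Set (Fin 3 → ℝ))
    (hdisj : ∀ t > t₁, Disjoint ((φ t) '' U) U)
    (J : ℝ → (Fin 3 → ℝ) → ℝ)
    (hJ : ∀ t x, J t x = (fderiv ℝ (φ t) x).det)
    -- the unitary pushforward (square-root-of-density transformation rule):
    (push : ℝ → ((Fin 3 → ℝ) → ℂ) → ((Fin 3 → ℝ) → ℂ))
    (hpush : ∀ t ψ y, push t ψ y =
      ψ ((φ t).symm y) * ((Real.sqrt |J t ((φ t).symm y)| : ℂ))⁻¹)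
    (F : ((Fin 3 → ℝ) → ℂ) → ((Fin 3 → ℝ) → ℂ) → ℂ)
    -- F agrees with the L² inner product:
    (hF : ∀ ψ₁ ψ₂, F ψ₁ ψ₂ = ∫ x : Fin 3 → ℝ, conj (ψ₁ x) * ψ₂ x)
    -- F is invariant under simultaneous transformation (c-covariance):
    (hinv : ∀ t ψ₁ ψ₂, F (push t ψ₁) (push t ψ₂) = F ψ₁ ψ₂) :
    ∀ ψl ψr : (Fin 3 → ℝ) → ℂ,
      MemLp ψl 2 (volume : Measure (Fin 3 → ℝ)) →
      MemLp ψr 2 (volume : Measure (Fin 3 → ℝ)) →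
      (∀ x ∉ U, ψl x = 0) → (∀ x ∉ U, ψr x = 0) →
      F ψl ψr ≠ 0 →
      ∀ t > t₁, F (push t ψl) ψr = 0 ∧ F (push t ψl) ψr ≠ F ψl ψr := by
  intro ψl ψr _ _ hl hr hne t htg
  have key : ∀ x, conj (push t ψl x) * ψr x = 0 := by
    intro x
    by_cases hx : x ∈ U
    · have hsym : (φ t).symm x ∉ U := by
        intro hmem
        have : x ∈ (φ t) '' U := ⟨(φ t).symm x, hmem, (φ t).apply_symm_apply x⟩
        exact (hdisj t htg).le_bot ⟨this, hx⟩
      rw [hpush, hl _ hsym]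
      simp
    · rw [hr x hx, mul_zero]
  have hz : F (push t ψl) ψr = 0 := by
    rw [hF]
    simp only [key]
    exact integral_zero _ _
  exact ⟨hz, by rw [hz]; exact fun h => hne h.symm⟩
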